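/- arXiv:1805.11135 — 2 statements merged into one kernel-verified Lean document; each statement's English description precedes it below -/
import Mathlib

section
/- Let 0 ≤ q ≤ 1 and let V_q ⊆ [0,1] be a transversal for ∼_q. Then [0,1] ⊆ ⋃_k (V_q ⊕_q r_k) ⊆ [-2,3], where {r_k} enumerates ℚ ∩ [-1,1]. -/
def qAdd (q x y : ℝ) : ℝ := x + y + (1 - q) * x * y

def qSim (q x y : ℝ) : Prop := ∃ r : ℚ, x = qAdd q y (r : ℝ)

def IsQTransversal (q : ℝ) (V : Set ℝ) : Prop :=
  V ⊆ Set.Icc 0 1 ∧ ∀ x ∈ Set.Icc (0:ℝ) 1, ∃! v, v ∈ V ∧ qSim q x v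

theorem qVitali_cover (q : ℚ) (hq0 : 0 ≤ q) (hq1 : q ≤ 1)
    (V : Set ℝ) (hV : IsQTransversal (q:ℝ) V) :
    Set.Icc (0:ℝ) 1 ⊆
      (⋃ (r : ℚ) (_ : (r:ℝ) ∈ Set.Icc (-1:ℝ) 1), (fun v => qAdd (q:ℝ) v (r:ℝ)) '' V) ∧
    (⋃ (r : ℚ) (_ : (r:ℝ) ∈ Set.Icc (-1:ℝ) 1), (fun v => qAdd (q:ℝ) v (r:ℝ)) '' V) ⊆
      Set.Icc (-2:ℝ) 3 := by
  obtain ⟨hVsub, hVtrans⟩ := hV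
  have hq0' : (0:ℝ) ≤ (q:ℝ) := by exact_mod_cast hq0
  have hq1' : ((q:ℝ)) ≤ 1 := by exact_mod_cast hq1
  constructor
  · intro x hx
    obtain ⟨v, ⟨hvV, r, hr⟩, _⟩ := hVtrans x hx
    obtain ⟨hv0, hv1⟩ := hVsub hvV
    obtain ⟨hx0, hx1⟩ := hx
    have hr' : x = v + (r:ℝ) + (1 - (q:ℝ)) * v * (r:ℝ) := hr
    have hrmem : ((r:ℝ)) ∈ Set.Icc (-1:ℝ) 1 := by
      constructor <;> nlinarith [mul_nonneg (sub_nonneg.2 hq1') hv0]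
    refine Set.mem_iUnion.2 ⟨r, Set.mem_iUnion.2 ⟨hrmem, ⟨v, hvV, ?_⟩⟩⟩
    simp [qAdd, hr']
  · intro x hx
    obtain ⟨r, hr⟩ := Set.mem_iUnion.1 hx
    obtain ⟨hrmem, v, hvV, hveq⟩ := Set.mem_iUnion.1 hr
    obtain ⟨hv0, hv1⟩ := hVsub hvV
    obtain ⟨hr0, hr1⟩ := hrmem
    simp only [qAdd] at hveq
    constructor <;> nlinarith [mul_nonneg (sub_nonneg.2 hq1') hv0,
      mul_nonneg hv0 (by linarith : (0:ℝ) ≤ (r:ℝ) + 1)]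
end

section
/- q-translational invariance: for 0 ≤ q < 1, any interval [x₁,x₂] ⊆ (-1/(1-q), +∞), and any v ∈ (-1/(1-q), +∞), μ_q([x₁,x₂] ⊕_q v) = μ_q([x₁,x₂]), where [x₁,x₂] ⊕_q v = [x₁ ⊕_q v, x₂ ⊕_q v]. -/
/- With `c = 1 - q`, translation by `v` is the affine map `x ↦ (1 + c v) x + v`, and the density
`(1 + c x)⁻¹` is rescaled by exactly the inverse of its slope, because `1 + c (x ⊕_q v)` factors
as `(1 + c x)(1 + c v)`. The substitution formula for an increasing affine map then gives the
invariance. -/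

open MeasureTheory

lemma qAdd_eq_mul_add (q x v : ℝ) : qAdd q x v = (1 + (1 - q) * v) * x + v := by
  unfold qAdd
  ring

lemma one_add_mul_qAdd (q x v : ℝ) :
    1 + (1 - q) * qAdd q x v = (1 + (1 - q) * x) * (1 + (1 - q) * v) := by
  unfold qAdd
  ring

lemma one_add_mul_pos_of_mem_Ioi {q v : ℝ} (hq1 : q < 1) (hv : v ∈ Set.Ioi (-1 / (1 - q))) :
    0 < 1 + (1 - q) * v := by
  have hc : 0 < 1 - q := sub_pos.mpr hq1
  have := (div_lt_iff₀' hc).mp (Set.mem_Ioi.mp hv)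
  linarith

lemma integral_Icc_comp_mul_add {E : Type*} [NormedAddCommGroup E] [NormedSpace ℝ E]
    (f : ℝ → E) {k : ℝ} (hk : 0 < k) (d a b : ℝ) :
    ∫ x in Set.Icc (k * a + d) (k * b + d), f x = k • ∫ x in Set.Icc a b, f (k * x + d) := by
  rcases le_or_gt a b with hab | hba
  · have hab' : k * a + d ≤ k * b + d := by gcongr
    rw [integral_Icc_eq_integral_Ioc, integral_Icc_eq_integral_Ioc,
      ← intervalIntegral.integral_of_le hab, ← intervalIntegral.integral_of_le hab',
      intervalIntegral.smul_integral_comp_mul_add]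
  · have hba' : k * b + d < k * a + d := by gcongr
    simp [Set.Icc_eq_empty_of_lt hba, Set.Icc_eq_empty_of_lt hba']

theorem qMeasure_translation_invariant_general (q x₁ x₂ v : ℝ) (hq1 : q < 1)
    (hv : v ∈ Set.Ioi (-1 / (1 - q))) :
    (∫ x in Set.Icc (qAdd q x₁ v) (qAdd q x₂ v), (1 + (1 - q) * x)⁻¹) =
      (∫ x in Set.Icc x₁ x₂, (1 + (1 - q) * x)⁻¹) := by
  have hk := one_add_mul_pos_of_mem_Ioi hq1 hv
  rw [qAdd_eq_mul_add, qAdd_eq_mul_add, integral_Icc_comp_mul_add _ hk]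
  simp only [← qAdd_eq_mul_add, one_add_mul_qAdd, mul_inv, integral_mul_const, smul_eq_mul]
  field_simp

theorem qMeasure_translation_invariant (q x₁ x₂ v : ℝ) (hq0 : 0 ≤ q) (hq1 : q < 1)
    (h12 : x₁ ≤ x₂) (h1 : x₁ ∈ Set.Ioi (-1 / (1 - q))) (hv : v ∈ Set.Ioi (-1 / (1 - q))) :
    (∫ x in Set.Icc (qAdd q x₁ v) (qAdd q x₂ v), (1 + (1 - q) * x)⁻¹) =
      (∫ x in Set.Icc x₁ x₂, (1 + (1 - q) * x)⁻¹) :=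
  qMeasure_translation_invariant_general q x₁ x₂ v hq1 hv
end
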